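/- Let m ≥ 0 and for each l ∈ {1,…,m} let S_l be a nonempty compact subset of ℝ^{n×n} closed under negation (W ∈ S_l implies −W ∈ S_l), and let S_0 be a nonempty compact subset of ℝ^{1×n} closed under negation. Let U_0 ∈ ℝ^{1×n} and U_l ∈ ℝ^{n×n} for l ∈ {1,…,m}. For l ∈ {1,…,m} define T_l(W) = U_0 (∏_{j=1}^{l−1} U_j) W (∏_{j=l+1}^{m} U_j) and T_0(x) = x ∏_{l=1}^m U_l. Then max over choices x_l ∈ S_l (0 ≤ l ≤ m) of ‖∏_{l=0}^m (x_l + U_l)‖_2² is at least ‖∏_{l=0}^m U_l‖_2² + Σ_{l=0}^m max_{x ∈ S_l} ‖T_l(x)‖_2². -/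

import Mathlib

/-!
Fix maximisers `x_l ∈ S_l`; since each `S_l` is symmetric, every sign pattern `±x_l` is still
admissible. By the parallelogram law the average of `‖(±a + c) R‖²` over the sign is
`‖a R‖² + ‖c R‖²`: the cross term cancels. Peeling off one factor at a time and dropping the
higher-order terms, the average of `‖∏ (±x_l + U_l)‖²` over all `2 ^ (m + 1)` sign patterns is at
least `‖∏ U_l‖² + ∑_l ‖T_l(x_l)‖²`, so some sign pattern does at least as well.
-/

/-- Squared Euclidean norm of a `1 × n` row vector (as a matrix). -/
def rowNormSq {n : ℕ} (X : Matrix (Fin 1) (Fin n) ℝ) : ℝ := ∑ j, (X 0 j) ^ 2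

lemma Fintype.exists_le_of_card_nsmul_le_sum {ι M : Type*} [Fintype ι] [Nonempty ι]
    [AddCommMonoid M] [LinearOrder M] [IsOrderedCancelAddMonoid M] {f : ι → M} {c : M}
    (h : Fintype.card ι • c ≤ ∑ i, f i) : ∃ i, c ≤ f i := by
  obtain ⟨i, -, hi⟩ := Finset.exists_le_of_sum_le Finset.univ_nonempty (f := fun _ => c)
    (by simpa using h)
  exact ⟨i, hi⟩

lemma IsCompact.exists_mem_sSup_setOf_eq {α : Type*} [TopologicalSpace α] {s : Set α}
    (hs : IsCompact s) (hne : s.Nonempty) {f : α → ℝ} (hf : Continuous f) :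
    ∃ a ∈ s, sSup {r | ∃ x ∈ s, r = f x} = f a := by
  simpa only [Set.image, eq_comm] using hs.exists_sSup_image_eq hne hf.continuousOn

def negIf {α : Type*} [Neg α] (b : Bool) (x : α) : α := if b then x else -x

lemma negIf_mem {α : Type*} [Neg α] {s : Set α} (hs : ∀ x ∈ s, -x ∈ s) {x : α} (hx : x ∈ s)
    (b : Bool) : negIf b x ∈ s := by
  cases b
  exacts [hs x hx, hx]

lemma Matrix.mul_negIf {l m n : Type*} [Fintype m] {R : Type*} [Ring R]
    (A : Matrix l m R) (b : Bool) (B : Matrix m n R) : A * negIf b B = negIf b (A * B) := by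
  cases b
  exacts [Matrix.mul_neg A B, rfl]

section RowNormSq

variable {n : ℕ}

lemma rowNormSq_nonneg (X : Matrix (Fin 1) (Fin n) ℝ) : 0 ≤ rowNormSq X :=
  Finset.sum_nonneg fun _ _ => sq_nonneg _

@[fun_prop]
lemma continuous_rowNormSq : Continuous (rowNormSq (n := n)) := by
  unfold rowNormSq
  fun_prop

lemma rowNormSq_add_add_rowNormSq_neg_add (a b : Matrix (Fin 1) (Fin n) ℝ) :
    rowNormSq (a + b) + rowNormSq (-a + b) = 2 * (rowNormSq a + rowNormSq b) := by
  simp only [rowNormSq, Matrix.add_apply, Matrix.neg_apply, Finset.mul_sum,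
    ← Finset.sum_add_distrib]
  exact Finset.sum_congr rfl fun _ _ => by ring

lemma sum_bool_rowNormSq_negIf_add_mul {k : ℕ} (a c : Matrix (Fin 1) (Fin k) ℝ)
    (R : Matrix (Fin k) (Fin n) ℝ) :
    ∑ b : Bool, rowNormSq ((negIf b a + c) * R)
      = 2 * (rowNormSq (a * R) + rowNormSq (c * R)) := by
  rw [Fintype.sum_bool, ← rowNormSq_add_add_rowNormSq_neg_add]
  simp [negIf, Matrix.add_mul]

end RowNormSq

section SignAverage

variable {n m : ℕ}

def signSum (v : Matrix (Fin 1) (Fin n) ℝ) (x U : Fin m → Matrix (Fin n) (Fin n) ℝ) : ℝ :=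
  ∑ ε : Fin m → Bool, rowNormSq (v * (List.ofFn fun l => negIf (ε l) (x l) + U l).prod)

/-- `∑_l ‖T_l(x_l)‖²`, with `U_0` replaced by `v`. -/
def firstOrderSum (v : Matrix (Fin 1) (Fin n) ℝ) (x U : Fin m → Matrix (Fin n) (Fin n) ℝ) :
    ℝ :=
  ∑ l : Fin m, rowNormSq (v * ((List.ofFn U).take (l : ℕ)).prod * x l *
    ((List.ofFn U).drop ((l : ℕ) + 1)).prod)

lemma firstOrderSum_nonneg (v : Matrix (Fin 1) (Fin n) ℝ)
    (x U : Fin m → Matrix (Fin n) (Fin n) ℝ) : 0 ≤ firstOrderSum v x U :=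
  Finset.sum_nonneg fun _ _ => rowNormSq_nonneg _

lemma mul_prod_ofFn_succ (v : Matrix (Fin 1) (Fin n) ℝ)
    (U : Fin (m + 1) → Matrix (Fin n) (Fin n) ℝ) :
    v * (List.ofFn U).prod = v * U 0 * (List.ofFn (Fin.tail U)).prod := by
  rw [List.ofFn_succ, List.prod_cons, Matrix.mul_assoc]
  rfl

lemma firstOrderSum_succ (v : Matrix (Fin 1) (Fin n) ℝ)
    (x U : Fin (m + 1) → Matrix (Fin n) (Fin n) ℝ) :
    firstOrderSum v x U = rowNormSq (v * x 0 * (List.ofFn (Fin.tail U)).prod)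
      + firstOrderSum (v * U 0) (Fin.tail x) (Fin.tail U) := by
  rw [firstOrderSum, Fin.sum_univ_succ, List.ofFn_succ]
  congr 1
  · simp only [Fin.coe_ofNat_eq_mod, Nat.zero_mod, List.take_zero, List.prod_nil,
      Matrix.mul_one, zero_add, List.drop_succ_cons, List.drop_zero]
    rfl
  · refine Finset.sum_congr rfl fun l _ => ?_
    simp only [Fin.val_succ, List.take_succ_cons, List.drop_succ_cons, List.prod_cons,
      Matrix.mul_assoc]
    rfl

lemma signSum_succ (v : Matrix (Fin 1) (Fin n) ℝ)
    (x U : Fin (m + 1) → Matrix (Fin n) (Fin n) ℝ) :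
    signSum v x U
      = ∑ b : Bool, signSum (negIf b (v * x 0) + v * U 0) (Fin.tail x) (Fin.tail U) := by
  rw [signSum, ← (Fin.consEquiv fun _ => Bool).sum_comp, Fintype.sum_prod_type]
  refine Finset.sum_congr rfl fun b _ => Finset.sum_congr rfl fun ε _ => ?_
  simp only [Fin.consEquiv_apply, List.ofFn_succ, Fin.cons_zero, Fin.cons_succ, List.prod_cons,
    ← Matrix.mul_assoc, Matrix.mul_add, Matrix.mul_negIf]
  rfl

lemma sum_bool_signSum_negIf_add (a c : Matrix (Fin 1) (Fin n) ℝ)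
    (x U : Fin m → Matrix (Fin n) (Fin n) ℝ) :
    ∑ b : Bool, signSum (negIf b a + c) x U = 2 * (signSum a x U + signSum c x U) := by
  simp only [signSum]
  rw [Finset.sum_comm, ← Finset.sum_add_distrib, Finset.mul_sum]
  exact Finset.sum_congr rfl fun ε _ => sum_bool_rowNormSq_negIf_add_mul a c _

lemma two_pow_succ_mul_le_sum_bool_signSum {x U : Fin m → Matrix (Fin n) (Fin n) ℝ}
    (h : ∀ v, 2 ^ m * (rowNormSq (v * (List.ofFn U).prod) + firstOrderSum v x U)
      ≤ signSum v x U)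
    (a c : Matrix (Fin 1) (Fin n) ℝ) :
    2 ^ (m + 1) * (rowNormSq (a * (List.ofFn U).prod) + rowNormSq (c * (List.ofFn U).prod)
      + firstOrderSum c x U) ≤ ∑ b : Bool, signSum (negIf b a + c) x U := by
  have hfa : 0 ≤ 2 ^ m * firstOrderSum a x U :=
    mul_nonneg (by positivity) (firstOrderSum_nonneg a x U)
  rw [sum_bool_signSum_negIf_add, pow_succ]
  linarith [h a, h c]

theorem two_pow_mul_le_signSum : ∀ {m : ℕ} (v : Matrix (Fin 1) (Fin n) ℝ)
    (x U : Fin m → Matrix (Fin n) (Fin n) ℝ),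
    2 ^ m * (rowNormSq (v * (List.ofFn U).prod) + firstOrderSum v x U) ≤ signSum v x U
  | 0, v, x, U => by simp [signSum, firstOrderSum]
  | m + 1, v, x, U => by
    rw [signSum_succ, mul_prod_ofFn_succ, firstOrderSum_succ, ← add_assoc,
      add_comm (rowNormSq _)]
    exact two_pow_succ_mul_le_sum_bool_signSum
      (fun w => two_pow_mul_le_signSum w (Fin.tail x) (Fin.tail U)) _ _

end SignAverage

theorem stmt_6 (n m : ℕ)
    (S0 : Set (Matrix (Fin 1) (Fin n) ℝ)) (S : Fin m → Set (Matrix (Fin n) (Fin n) ℝ))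
    (hS0ne : S0.Nonempty) (hS0c : IsCompact S0) (hS0neg : ∀ x ∈ S0, -x ∈ S0)
    (hSne : ∀ l, (S l).Nonempty) (hSc : ∀ l, IsCompact (S l))
    (hSneg : ∀ l, ∀ W ∈ S l, -W ∈ S l)
    (U0 : Matrix (Fin 1) (Fin n) ℝ) (U : Fin m → Matrix (Fin n) (Fin n) ℝ) :
    rowNormSq (U0 * (List.ofFn U).prod)
      + sSup {r : ℝ | ∃ x0 ∈ S0, r = rowNormSq (x0 * (List.ofFn U).prod)}
      + ∑ l : Fin m, sSup {r : ℝ | ∃ W ∈ S l,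
          r = rowNormSq (U0 * ((List.ofFn U).take (l : ℕ)).prod * W *
                ((List.ofFn U).drop ((l : ℕ) + 1)).prod)}
    ≤ sSup {r : ℝ | ∃ x0 ∈ S0, ∃ x : Fin m → Matrix (Fin n) (Fin n) ℝ,
        (∀ l, x l ∈ S l) ∧
        r = rowNormSq ((x0 + U0) * (List.ofFn fun l => x l + U l).prod)} := by
  obtain ⟨x0, hx0, hsup0⟩ := hS0c.exists_mem_sSup_setOf_eq hS0ne
    (f := fun y => rowNormSq (y * (List.ofFn U).prod)) (by fun_prop)
  choose W hW hsupW using fun l => (hSc l).exists_mem_sSup_setOf_eq (hSne l)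
    (f := fun y => rowNormSq (U0 * ((List.ofFn U).take (l : ℕ)).prod * y *
      ((List.ofFn U).drop ((l : ℕ) + 1)).prod)) (by fun_prop)
  rw [hsup0, Finset.sum_congr rfl fun l _ => hsupW l, add_comm (rowNormSq _)]
  have hbdd : BddAbove {r : ℝ | ∃ x0 ∈ S0, ∃ x : Fin m → Matrix (Fin n) (Fin n) ℝ,
      (∀ l, x l ∈ S l) ∧
      r = rowNormSq ((x0 + U0) * (List.ofFn fun l => x l + U l).prod)} := by
    refine (((hS0c.prod (isCompact_univ_pi hSc)).image (f := fun p =>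
      rowNormSq ((p.1 + U0) * (List.ofFn fun l => p.2 l + U l).prod)) ?_).bddAbove).mono ?_
    · simp only [List.ofFn_eq_map]
      fun_prop
    · rintro r ⟨x0, hx0, x, hx, rfl⟩
      exact ⟨(x0, x), ⟨hx0, fun l _ => hx l⟩, rfl⟩
  obtain ⟨b, hb⟩ := Fintype.exists_le_of_card_nsmul_le_sum
    (f := fun b => signSum (negIf b x0 + U0) W U) (by
      simpa [pow_succ', mul_assoc] using
        two_pow_succ_mul_le_sum_bool_signSum (fun v => two_pow_mul_le_signSum v W U) x0 U0)
  obtain ⟨ε, hε⟩ := Fintype.exists_le_of_card_nsmul_le_sum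
    (f := fun ε : Fin m → Bool => rowNormSq ((negIf b x0 + U0) *
      (List.ofFn fun l => negIf (ε l) (W l) + U l).prod)) (by simpa [signSum] using hb)
  exact hε.trans (le_csSup hbdd ⟨negIf b x0, negIf_mem hS0neg hx0 b,
    fun l => negIf (ε l) (W l), fun l => negIf_mem (hSneg l) (hW l) (ε l), rfl⟩)
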